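/- arXiv:1611.09933 — 2 statements merged into one kernel-verified Lean document; each statement's English description precedes it below -/
import Mathlib

section
/- If random variables Z_1, ..., Z_{n+1} are exchangeable, then the probability that Z_{n+1} is strictly greater than max(Z_1, ..., Z_n) is at most 1/(n+1). -/
open MeasureTheory ENNReal

/-! The events "coordinate `j` is the strict maximum", `j = 1, …, n + 1`, are pairwise disjoint,
and exchangeability gives them all the same probability, since a transposition maps one onto
another. Hence `n + 1` times that common probability is at most `1`. -/

section StrictMax

variable {ι α : Type*} [LinearOrder α]

def strictMaxAt (j : ι) : Set (ι → α) := {f | ∀ i ≠ j, f i < f j}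

theorem pairwise_disjoint_strictMaxAt :
    Pairwise (Function.onFun Disjoint (strictMaxAt (ι := ι) (α := α))) :=
  fun j k hjk => Set.disjoint_left.2 fun _ hj hk => lt_asymm (hj k hjk.symm) (hk j hjk)

theorem preimage_comp_perm_strictMaxAt (σ : Equiv.Perm ι) (j : ι) :
    (fun f : ι → α => f ∘ σ) ⁻¹' strictMaxAt j = strictMaxAt (σ j) := by
  ext f
  simp only [strictMaxAt, Set.mem_preimage, Set.mem_ofPred_eq, Function.comp_apply]
  exact σ.forall_congr fun {_} => by simp only [ne_eq, EmbeddingLike.apply_eq_iff_eq]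

theorem strictMaxAt_last (n : ℕ) :
    strictMaxAt (Fin.last n) =
      {f : Fin (n + 1) → α | ∀ i : Fin n, f i.castSucc < f (Fin.last n)} := by
  ext f
  simp only [strictMaxAt, Set.mem_ofPred_eq, Fin.forall_fin_succ', ne_eq, not_true_eq_false,
    IsEmpty.forall_iff, and_true, (Fin.castSucc_lt_last _).ne, not_false_eq_true, forall_const]

variable [MeasurableSpace α] [TopologicalSpace α] [OpensMeasurableSpace α]
  [SecondCountableTopology α] [OrderClosedTopology α]

theorem measurableSet_strictMaxAt [Countable ι] (j : ι) :
    MeasurableSet (strictMaxAt (α := α) j) := by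
  simp only [strictMaxAt, Set.ofPred_forall]
  exact .iInter fun i => .iInter fun _ =>
    measurableSet_lt (measurable_pi_apply i) (measurable_pi_apply j)

variable {ν : Measure (ι → α)}

theorem measure_strictMaxAt_eq [Countable ι]
    (hν : ∀ σ : Equiv.Perm ι, ν.map (fun f => f ∘ σ) = ν) (j k : ι) :
    ν (strictMaxAt j) = ν (strictMaxAt k) := by
  classical
  conv_lhs => rw [← hν (Equiv.swap j k)]
  rw [Measure.map_apply (by fun_prop) (measurableSet_strictMaxAt j),
    preimage_comp_perm_strictMaxAt, Equiv.swap_apply_left]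

theorem measure_strictMaxAt_le_inv_card [Fintype ι] [IsProbabilityMeasure ν]
    (hν : ∀ σ : Equiv.Perm ι, ν.map (fun f => f ∘ σ) = ν) (j : ι) :
    ν (strictMaxAt j) ≤ (Fintype.card ι : ℝ≥0∞)⁻¹ := by
  rw [ENNReal.le_inv_iff_mul_le]
  calc ν (strictMaxAt j) * Fintype.card ι
      = ∑ k, ν (strictMaxAt k) := by
        simp [measure_strictMaxAt_eq hν _ j, mul_comm]
    _ ≤ ν Set.univ := sum_measure_le_measure_univ
        (fun k _ => (measurableSet_strictMaxAt k).nullMeasurableSet)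
        (fun k _ l _ hkl => (pairwise_disjoint_strictMaxAt hkl).aedisjoint)
    _ = 1 := measure_univ

end StrictMax

/-- If `Z 0, …, Z n` (that is, `Z₁,…,Z_{n+1}`) are exchangeable real random variables, then the
probability that the last one strictly exceeds the maximum of the first `n` is at most
`1/(n+1)`. -/
theorem exchangeable_prob_last_gt_max {Ω : Type*} [MeasurableSpace Ω]
    (μ : Measure Ω) [IsProbabilityMeasure μ] (n : ℕ)
    (Z : Ω → Fin (n + 1) → ℝ) (hZ : Measurable Z)
    (hexch : ∀ σ : Equiv.Perm (Fin (n + 1)),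
      μ.map (fun ω => fun i => Z ω (σ i)) = μ.map Z) :
    μ {ω | ∀ i : Fin n, Z ω i.castSucc < Z ω (Fin.last n)} ≤ 1 / ((n : ℝ≥0∞) + 1) := by
  have : IsProbabilityMeasure (μ.map Z) := Measure.isProbabilityMeasure_map hZ.aemeasurable
  have hlaw : ∀ σ : Equiv.Perm (Fin (n + 1)), (μ.map Z).map (fun f => f ∘ σ) = μ.map Z :=
    fun σ => by rw [Measure.map_map (by fun_prop) hZ]; exact hexch σ
  have hevent : {ω | ∀ i : Fin n, Z ω i.castSucc < Z ω (Fin.last n)} =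
      Z ⁻¹' strictMaxAt (Fin.last n) := by
    rw [strictMaxAt_last]; rfl
  rw [hevent, ← Measure.map_apply hZ (measurableSet_strictMaxAt _), one_div]
  simpa using measure_strictMaxAt_le_inv_card hlaw (Fin.last n)
end

section
/- If Z_1, ..., Z_{n+1} are exchangeable real random variables and each Z_i almost surely distinct, then the rank of Z_{n+1} among Z_1, ..., Z_{n+1} is uniformly distributed on {1, 2, ..., n+1}. -/
open MeasureTheory ENNReal
open scoped Finset

/-!
Almost surely the values `Z ω i` are distinct, and then their ranks are a permutation of
`1, …, n + 1`, so for each `k` exactly one coordinate has rank `k + 1`. Exchangeability (via the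
transposition of `j` and the last index) gives every coordinate the same rank distribution, hence
the `n + 1` equal probabilities `P(rank of Z j = k + 1)` sum to `1`.
-/

namespace Exchangeable

section Rank

variable {ι α : Type*} [Fintype ι] [LinearOrder α]

def rank (z : ι → α) (j : ι) : ℕ :=
  #{i | z i ≤ z j}

theorem ncard_setOf_le_eq_rank (z : ι → α) (j : ι) :
    Set.ncard {i | z i ≤ z j} = rank z j := by
  rw [rank, ← Set.ncard_coe_finset, Finset.coe_filter_univ]

theorem rank_comp_equiv (z : ι → α) (σ : ι ≃ ι) (j : ι) :
    rank (z ∘ σ) j = rank z (σ j) := by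
  unfold rank
  exact Finset.card_bij (fun i _ => σ i) (fun _ hi => by simpa using hi)
    (fun _ _ _ _ h => σ.injective h)
    (fun i hi => ⟨σ.symm i, by simpa using hi, σ.apply_symm_apply i⟩)

theorem one_le_rank (z : ι → α) (j : ι) : 1 ≤ rank z j := by
  unfold rank
  exact Finset.card_pos.2 ⟨j, by simp⟩

theorem rank_le_card (z : ι → α) (j : ι) : rank z j ≤ Fintype.card ι := by
  unfold rank
  exact (Finset.card_filter_le _ _).trans_eq Finset.card_univ

theorem rank_lt_rank {z : ι → α} {i j : ι} (h : z i < z j) : rank z i < rank z j := by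
  unfold rank
  refine Finset.card_lt_card (Finset.ssubset_iff_of_subset ?_ |>.2 ⟨j, ?_⟩)
  · intro k hk
    simp only [Finset.mem_filter] at hk ⊢
    exact ⟨hk.1, hk.2.trans h.le⟩
  · simpa using h

theorem rank_injective {z : ι → α} (hz : Function.Injective z) : Function.Injective (rank z) := by
  intro i j hij
  by_contra hne
  rcases lt_or_gt_of_ne (hz.ne hne) with h | h
  · exact (rank_lt_rank h).ne hij
  · exact (rank_lt_rank h).ne' hij

theorem existsUnique_rank_eq {z : ι → α} (hz : Function.Injective z) {m : ℕ} (hm₁ : 1 ≤ m)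
    (hm : m ≤ Fintype.card ι) : ∃! j, rank z j = m := by
  obtain ⟨j, -, hj⟩ := Finset.surjOn_of_injOn_of_card_le (rank z) (s := Finset.univ)
    (t := Finset.Icc 1 (Fintype.card ι))
    (fun j _ => Finset.mem_Icc.2 ⟨one_le_rank z j, rank_le_card z j⟩)
    (rank_injective hz).injOn (by simp) (Finset.mem_Icc.2 ⟨hm₁, hm⟩)
  exact ⟨j, hj, fun i hi => rank_injective hz (hi.trans hj.symm)⟩

end Rank

section

variable {Ω ι : Type*} [MeasurableSpace Ω] {μ : Measure Ω}

theorem ae_injective_of_measure_eq_zero [Countable ι] {α : Type*} {Z : Ω → ι → α}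
    (h : ∀ i j, i ≠ j → μ {ω | Z ω i = Z ω j} = 0) : ∀ᵐ ω ∂μ, Function.Injective (Z ω) := by
  have : ∀ᵐ ω ∂μ, ∀ i j, i ≠ j → Z ω i ≠ Z ω j := by
    simp only [ae_all_iff, Filter.eventually_imp_distrib_left]
    exact fun i j hij => measure_eq_zero_iff_ae_notMem.1 (h i j hij)
  exact this.mono fun ω hω i j hij => by_contra fun hne => hω i j hne hij

theorem measure_eq_one_div_card_of_ae_existsUnique [Fintype ι] [IsProbabilityMeasure μ]
    {E : ι → Set Ω} (hE : ∀ j, NullMeasurableSet (E j) μ) (hunique : ∀ᵐ ω ∂μ, ∃! j, ω ∈ E j)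
    (heq : ∀ i j, μ (E i) = μ (E j)) (j : ι) : μ (E j) = 1 / Fintype.card ι := by
  have hdisj : Pairwise (Function.onFun (AEDisjoint μ) E) := fun a b hab =>
    measure_eq_zero_iff_ae_notMem.2 <| hunique.mono fun ω h hω => hab (h.unique hω.1 hω.2)
  have hcover : μ (⋃ i, E i) = 1 := by
    rw [measure_congr (ae_eq_univ.2 ?_), measure_univ]
    exact measure_eq_zero_iff_ae_notMem.2 <| hunique.mono fun ω h hω =>
      hω (Set.mem_iUnion.2 h.exists)
  have hsum : (Fintype.card ι : ℝ≥0∞) * μ (E j) = 1 := by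
    rw [← hcover, measure_iUnion₀ hdisj hE, tsum_fintype, ← nsmul_eq_mul, ← Finset.card_univ,
      ← Finset.sum_const]
    exact Finset.sum_congr rfl fun i _ => heq j i
  have hne : (Fintype.card ι : ℝ≥0∞) ≠ 0 := Nat.cast_ne_zero.2 (Fintype.card_pos_iff.2 ⟨j⟩).ne'
  rw [ENNReal.eq_div_iff hne (natCast_ne_top _), hsum]

end

section Measurable

variable {Ω ι α : Type*} [MeasurableSpace Ω] {μ : Measure Ω} [Fintype ι] [LinearOrder α]
  [MeasurableSpace α] [TopologicalSpace α] [OpensMeasurableSpace α] [OrderClosedTopology α]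
  [SecondCountableTopology α]

theorem measurable_rank (j : ι) : Measurable fun z : ι → α => rank z j := by
  have : (fun z : ι → α => rank z j) = fun z => ∑ i, if z i ≤ z j then 1 else 0 := by
    funext z; rw [rank, Finset.card_filter]
  rw [this]
  exact Finset.measurable_sum _ fun i _ => Measurable.ite
    (measurableSet_le (measurable_pi_apply i) (measurable_pi_apply j)) measurable_const
      measurable_const

theorem measure_rank_eq_of_exchangeable {Z : Ω → ι → α} (hZ : Measurable Z)
    (hexch : ∀ σ : Equiv.Perm ι, μ.map (fun ω => fun i => Z ω (σ i)) = μ.map Z)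
    (m : ℕ) (i j : ι) : μ {ω | rank (Z ω) i = m} = μ {ω | rank (Z ω) j = m} := by
  classical
  have hS : MeasurableSet {z : ι → α | rank z j = m} :=
    measurable_rank j (measurableSet_singleton m)
  have hZσ : Measurable fun ω => fun k => Z ω (Equiv.swap j i k) :=
    measurable_pi_lambda _ fun k => (measurable_pi_apply _).comp hZ
  calc μ {ω | rank (Z ω) i = m}
      = μ.map (fun ω => fun k => Z ω (Equiv.swap j i k)) {z | rank z j = m} := by
        rw [Measure.map_apply hZσ hS]
        congr 1
        ext ω
        simp [← Function.comp_def, rank_comp_equiv]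
    _ = μ {ω | rank (Z ω) j = m} := by
        rw [hexch, Measure.map_apply hZ hS]
        rfl

end Measurable

end Exchangeable

open Exchangeable in
/-- If `Z₁,…,Z_{n+1}` are exchangeable and almost surely distinct, then the rank of `Z_{n+1}`,
namely `#{i : Z i ≤ Z_{n+1}}`, is uniformly distributed on `{1,…,n+1}`. -/
theorem exchangeable_rank_uniform {Ω : Type*} [MeasurableSpace Ω]
    (μ : Measure Ω) [IsProbabilityMeasure μ] (n : ℕ)
    (Z : Ω → Fin (n + 1) → ℝ) (hZ : Measurable Z)
    (hexch : ∀ σ : Equiv.Perm (Fin (n + 1)),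
      μ.map (fun ω => fun i => Z ω (σ i)) = μ.map Z)
    (hdistinct : ∀ i j : Fin (n + 1), i ≠ j → μ {ω | Z ω i = Z ω j} = 0) :
    ∀ k : Fin (n + 1),
      μ {ω | Set.ncard {i : Fin (n + 1) | Z ω i ≤ Z ω (Fin.last n)} = (k : ℕ) + 1} =
        1 / ((n : ℝ≥0∞) + 1) := by
  intro k
  have hunique : ∀ᵐ ω ∂μ, ∃! j, ω ∈ {ω | rank (Z ω) j = (k : ℕ) + 1} :=
    (ae_injective_of_measure_eq_zero hdistinct).mono fun ω hω =>
      existsUnique_rank_eq hω (Nat.le_add_left 1 k) (by simpa using k.isLt)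
  have hE : ∀ j, NullMeasurableSet {ω | rank (Z ω) j = (k : ℕ) + 1} μ := fun j =>
    ((measurable_rank j).comp hZ (measurableSet_singleton _)).nullMeasurableSet
  simp_rw [ncard_setOf_le_eq_rank]
  simpa using measure_eq_one_div_card_of_ae_existsUnique hE hunique
    (measure_rank_eq_of_exchangeable hZ hexch _) (Fin.last n)
end
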